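/- arXiv:1409.1472 — 2 statements merged into one kernel-verified Lean document; each statement's English description precedes it below -/
import Mathlib

section
/- Let ζ be an irrational real number with λ_1(ζ) < ∞. Then the set of positive integers k with λ_k(ζ) > 1 is finite. -/
/-- Distance from a real number to the nearest integer. -/
noncomputable def distNearestInt (a : ℝ) : ℝ := |a - round a|

/-- `max_{1 ≤ j ≤ k} ‖ζ^j x‖` for a positive integer `x`. -/
noncomputable def maxDist (k : ℕ) (ζ : ℝ) (x : ℕ) : ℝ :=
  ⨆ j ∈ Finset.Icc 1 k, distNearestInt (ζ ^ j * x)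

/-- The approximation constant `λ_k(ζ)`, as an extended real number in `[0,∞]`. -/
noncomputable def lambdaConst (k : ℕ) (ζ : ℝ) : EReal :=
  sSup (insert (0 : EReal) {e : EReal | ∃ η : ℝ, e = (η : EReal) ∧
    {x : ℕ | 0 < x ∧ 0 < maxDist k ζ x ∧ maxDist k ζ x ≤ (x : ℝ) ^ (-η)}.Infinite})

/-- The uniform approximation constant `λ̂_k(ζ)`, as an extended real number in `[0,∞]`. -/
noncomputable def lambdaHatConst (k : ℕ) (ζ : ℝ) : EReal :=
  sSup (insert (0 : EReal) {e : EReal | ∃ η : ℝ, e = (η : EReal) ∧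
    ∃ X₀ : ℝ, ∀ X : ℝ, X₀ ≤ X → ∃ x : ℕ, 1 ≤ x ∧ (x : ℝ) ≤ X ∧
      0 < maxDist k ζ x ∧ maxDist k ζ x ≤ X ^ (-η)})

/-- The dual approximation constant `w_k(ζ)`, as an extended real number in `[0,∞]`. -/
noncomputable def wConst (k : ℕ) (ζ : ℝ) : EReal :=
  sSup (insert (0 : EReal) {e : EReal | ∃ ν : ℝ, e = (ν : EReal) ∧
    ∀ X₀ : ℝ, ∃ X : ℝ, X₀ ≤ X ∧ ∃ p : Fin (k + 1) → ℤ,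
      (∀ j, |(p j : ℝ)| ≤ X) ∧
      0 < |∑ j : Fin (k + 1), ζ ^ (j : ℕ) * (p j : ℝ)| ∧
      |∑ j : Fin (k + 1), ζ ^ (j : ℕ) * (p j : ℝ)| ≤ X ^ (-ν)})

/-- The uniform dual approximation constant `ŵ_k(ζ)`, as an extended real number in `[0,∞]`. -/
noncomputable def wHatConst (k : ℕ) (ζ : ℝ) : EReal :=
  sSup (insert (0 : EReal) {e : EReal | ∃ ν : ℝ, e = (ν : EReal) ∧
    ∃ X₀ : ℝ, ∀ X : ℝ, X₀ ≤ X → ∃ p : Fin (k + 1) → ℤ,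
      (∀ j, |(p j : ℝ)| ≤ X) ∧
      0 < |∑ j : Fin (k + 1), ζ ^ (j : ℕ) * (p j : ℝ)| ∧
      |∑ j : Fin (k + 1), ζ ^ (j : ℕ) * (p j : ℝ)| ≤ X ^ (-ν)})


/-!
If `x` is a good simultaneous approximation with `max_{j ≤ k} ‖ζ^j x‖ ≤ x^{-η}`, `η > 1`,
and `a_j` is the integer nearest to `ζ^j x`, then `x a_{j+1} - a_1 a_j` is an integer of size
`O(x^{1-η}) < 1`, hence zero. So `a_j / x = q^j` with `q = a_1 / x`, and since `q^k x = a_k` is an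
integer, the reduced denominator `y` of `q` satisfies `y^k ∣ x`. The fraction `q` approximates `ζ`
to within `x^{-η-1}`, which gives `‖ζ y‖ ≤ y x^{-η-1} ≤ y^{-(2k-1)}`. Each `y` arises from only
finitely many `x`, so `λ_1(ζ) ≥ 2k - 1` whenever `λ_k(ζ) > 1`.
-/

open Filter

lemma distNearestInt_nonneg (a : ℝ) : 0 ≤ distNearestInt a := abs_nonneg _

lemma distNearestInt_le_half (a : ℝ) : distNearestInt a ≤ 1 / 2 := abs_sub_round a

lemma distNearestInt_le_abs_sub (a : ℝ) (m : ℤ) : distNearestInt a ≤ |a - m| := round_le a m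

lemma Irrational.distNearestInt_pos {a : ℝ} (h : Irrational a) : 0 < distNearestInt a :=
  abs_pos.mpr (sub_ne_zero.mpr (h.ne_int _))

lemma distNearestInt_le_maxDist {k j : ℕ} (ζ : ℝ) (x : ℕ) (hj : j ∈ Finset.Icc 1 k) :
    distNearestInt (ζ ^ j * x) ≤ maxDist k ζ x := by
  have hbdd : BddAbove (Set.range fun i => ⨆ _ : i ∈ Finset.Icc 1 k, distNearestInt (ζ ^ i * x)) :=
    ⟨1 / 2, Set.forall_mem_range.mpr fun i =>
      Real.iSup_le (fun _ => distNearestInt_le_half _) (by norm_num)⟩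
  exact le_ciSup_of_le hbdd j
    (le_ciSup (f := fun _ : j ∈ Finset.Icc 1 k => distNearestInt (ζ ^ j * x))
      (Set.finite_range _).bddAbove hj)

lemma maxDist_le {k : ℕ} {ζ c : ℝ} {x : ℕ} (hc : 0 ≤ c)
    (h : ∀ j ∈ Finset.Icc 1 k, distNearestInt (ζ ^ j * x) ≤ c) : maxDist k ζ x ≤ c :=
  Real.iSup_le (fun j => Real.iSup_le (h j) hc) hc

lemma maxDist_one (ζ : ℝ) (x : ℕ) : maxDist 1 ζ x = distNearestInt (ζ * x) := by
  refine le_antisymm (maxDist_le (distNearestInt_nonneg _) fun j hj => ?_) ?_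
  · rw [Finset.Icc_self, Finset.mem_singleton] at hj
    rw [hj, pow_one]
  · simpa using distNearestInt_le_maxDist (k := 1) ζ x (Finset.mem_Icc.mpr ⟨le_rfl, le_rfl⟩)

def approxSet (k : ℕ) (ζ η : ℝ) : Set ℕ :=
  {x | 0 < x ∧ 0 < maxDist k ζ x ∧ maxDist k ζ x ≤ (x : ℝ) ^ (-η)}

lemma coe_le_lambdaConst {k : ℕ} {ζ η : ℝ} (h : (approxSet k ζ η).Infinite) :
    (η : EReal) ≤ lambdaConst k ζ :=
  le_sSup (Set.mem_insert_of_mem _ ⟨η, rfl, h⟩)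

lemma exists_approxSet_infinite_of_coe_lt_lambdaConst {k : ℕ} {ζ r : ℝ} (hr : 0 ≤ r)
    (h : (r : EReal) < lambdaConst k ζ) : ∃ η, r < η ∧ (approxSet k ζ η).Infinite := by
  obtain ⟨e, he, hre⟩ := lt_sSup_iff.mp h
  rcases Set.mem_insert_iff.mp he with rfl | ⟨η, rfl, hη⟩
  · exact absurd hre (not_lt.mpr (by exact_mod_cast hr))
  · exact ⟨η, EReal.coe_lt_coe_iff.mp hre, hη⟩

lemma Set.Infinite.of_finite_fibers {α β : Type*} {s : Set α} {t : Set β} (R : α → β → Prop)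
    (hs : s.Infinite) (hR : ∀ a ∈ s, ∃ b ∈ t, R a b) (hfib : ∀ b ∈ t, {a | R a b}.Finite) :
    t.Infinite := fun ht =>
  hs <| (ht.biUnion hfib).subset fun a ha =>
    let ⟨_, hb, hab⟩ := hR a ha
    Set.mem_biUnion hb hab

lemma Rat.den_dvd_of_mul_eq_intCast {q : ℚ} {x b : ℤ} (h : q * x = b) : (q.den : ℤ) ∣ x := by
  rcases eq_or_ne x 0 with rfl | hx
  · exact dvd_zero _
  have hq : q = Rat.divInt b x := by
    rw [Rat.divInt_eq_div, ← h, mul_div_cancel_right₀ _ (Int.cast_ne_zero.mpr hx)]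
  exact hq ▸ Rat.den_dvd b x

/-- The integer `x c - a b` equals `x e_c - u x e_b - v x e_a - e_a e_b`, where the `e`'s are the
rounding errors of `a ≈ u x`, `b ≈ v x`, `c ≈ u v x`; so it has absolute value `< 1`. -/
lemma natCast_mul_round_eq {u v ε : ℝ} {x : ℕ} (hx : 0 < x) (hε : ε ≤ 1)
    (hu : distNearestInt (u * x) ≤ ε) (hv : distNearestInt (v * x) ≤ ε)
    (huv : distNearestInt (u * v * x) ≤ ε) (hsmall : (2 + |u| + |v|) * (x * ε) < 1) :
    (x : ℤ) * round (u * v * x) = round (u * x) * round (v * x) := by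
  set ea := (round (u * x) : ℝ) - u * x
  set eb := (round (v * x) : ℝ) - v * x
  set ec := (round (u * v * x) : ℝ) - u * v * x
  have hea : |ea| ≤ ε := by rw [abs_sub_comm]; exact hu
  have heb : |eb| ≤ ε := by rw [abs_sub_comm]; exact hv
  have hec : |ec| ≤ ε := by rw [abs_sub_comm]; exact huv
  have hx1 : (1 : ℝ) ≤ x := by exact_mod_cast hx
  have hε0 : 0 ≤ ε := (abs_nonneg _).trans hea
  have hdiff : (((x : ℤ) * round (u * v * x) - round (u * x) * round (v * x) : ℤ) : ℝ) =
      x * ec - u * x * eb - v * x * ea - ea * eb := by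
    push_cast [ea, eb, ec]
    ring
  have h1 : |x * ec| ≤ x * ε := by
    rw [abs_mul, Nat.abs_cast]; exact mul_le_mul_of_nonneg_left hec (by positivity)
  have h2 : |u * x * eb| ≤ |u| * (x * ε) := by
    rw [abs_mul, abs_mul, Nat.abs_cast, mul_assoc]; gcongr
  have h3 : |v * x * ea| ≤ |v| * (x * ε) := by
    rw [abs_mul, abs_mul, Nat.abs_cast, mul_assoc]; gcongr
  have h4 : |ea * eb| ≤ x * ε := by
    rw [abs_mul]; exact mul_le_mul (hea.trans (hε.trans hx1)) heb (abs_nonneg _) (by positivity)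
  have hlt : |(((x : ℤ) * round (u * v * x) - round (u * x) * round (v * x) : ℤ) : ℝ)| < 1 := by
    rw [hdiff]
    linarith [abs_sub (x * ec - u * x * eb - v * x * ea) (ea * eb),
      abs_sub (x * ec - u * x * eb) (v * x * ea), abs_sub (x * ec) (u * x * eb)]
  exact sub_eq_zero.mp (Int.abs_lt_one_iff.mp (by exact_mod_cast hlt))

lemma round_div_pow_mul_eq {ζ : ℝ} {x k : ℕ} (hk : 1 ≤ k) (hx : 0 < x)
    (hrec : ∀ j, 1 ≤ j → j < k →
      (x : ℤ) * round (ζ ^ (j + 1) * x) = round (ζ * x) * round (ζ ^ j * x)) :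
    ((round (ζ * x) : ℚ) / x) ^ k * x = round (ζ ^ k * x) := by
  have hx0 : (x : ℚ) ≠ 0 := by positivity
  induction k, hk using Nat.le_induction with
  | base => rw [pow_one, pow_one, div_mul_cancel₀ _ hx0]
  | succ j hj ih =>
    have hj' := hrec j hj (Nat.lt_succ_self j)
    rw [pow_succ', mul_assoc, ih fun i hi hij => hrec i hi (hij.trans (Nat.lt_succ_self j)),
      div_mul_eq_mul_div, div_eq_iff hx0]
    exact_mod_cast ((mul_comm _ _).trans hj').symm

lemma exists_den_pow_le_of_maxDist_small {ζ : ℝ} {k x : ℕ} (hk : 1 ≤ k) (hx : 0 < x)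
    (hsmall : 4 * (1 + |ζ|) ^ k * (x * maxDist k ζ x) < 1) :
    ∃ y : ℕ, 0 < y ∧ y ^ k ≤ x ∧ (x : ℝ) * distNearestInt (ζ * y) ≤ y * maxDist k ζ x := by
  set ε := maxDist k ζ x
  have hdist : ∀ j, 1 ≤ j → j ≤ k → distNearestInt (ζ ^ j * x) ≤ ε := fun j hj hjk =>
    distNearestInt_le_maxDist ζ x (Finset.mem_Icc.mpr ⟨hj, hjk⟩)
  have hdist1 : distNearestInt (ζ * x) ≤ ε := by simpa using hdist 1 le_rfl hk
  have hε : ε ≤ 1 :=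
    maxDist_le zero_le_one fun j _ => (distNearestInt_le_half _).trans (by norm_num)
  have hxε : 0 ≤ (x : ℝ) * ε :=
    mul_nonneg (Nat.cast_nonneg x) ((distNearestInt_nonneg _).trans hdist1)
  have hrec : ∀ j, 1 ≤ j → j < k →
      (x : ℤ) * round (ζ ^ (j + 1) * x) = round (ζ * x) * round (ζ ^ j * x) := by
    intro j hj hjk
    have hζ : |ζ| ≤ (1 + |ζ|) ^ k :=
      (le_add_of_nonneg_left zero_le_one).trans (le_self_pow₀ (by simp) (by omega))
    have hζj : |ζ ^ j| ≤ (1 + |ζ|) ^ k := by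
      rw [abs_pow]
      exact (pow_le_pow_left₀ (abs_nonneg ζ) (by simp) j).trans
        (pow_le_pow_right₀ (by simp) hjk.le)
    have hone : 1 ≤ (1 + |ζ|) ^ k := one_le_pow₀ (by simp)
    have hC : 2 + |ζ| + |ζ ^ j| ≤ 4 * (1 + |ζ|) ^ k := by linarith
    have := natCast_mul_round_eq (u := ζ) (v := ζ ^ j) hx hε hdist1 (hdist j hj hjk.le)
      (by rw [← pow_succ']; exact hdist (j + 1) (by omega) hjk)
      ((mul_le_mul_of_nonneg_right hC hxε).trans_lt hsmall)
    rwa [← pow_succ'] at this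
  set q : ℚ := (round (ζ * x) : ℚ) / x with hq
  have hden : (q.den : ℤ) ^ k ∣ x := by
    have := Rat.den_dvd_of_mul_eq_intCast (round_div_pow_mul_eq hk hx hrec)
    rwa [Rat.den_pow, Nat.cast_pow] at this
  refine ⟨q.den, q.den_pos, Nat.le_of_dvd hx (by exact_mod_cast hden), ?_⟩
  have hnum : (q.num : ℝ) = round (ζ * x) / x * q.den := by
    have h := congrArg (Rat.cast : ℚ → ℝ) (Rat.mul_den_eq_num q)
    push_cast [hq] at h
    exact h.symm
  have hx0 : (x : ℝ) ≠ 0 := by positivity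
  have herr : (x : ℝ) * (ζ * q.den - q.num) = q.den * (ζ * x - round (ζ * x)) := by
    rw [hnum]; field_simp
  calc (x : ℝ) * distNearestInt (ζ * q.den)
      ≤ x * |ζ * q.den - q.num| :=
        mul_le_mul_of_nonneg_left (distNearestInt_le_abs_sub _ _) (Nat.cast_nonneg x)
    _ = |x * (ζ * q.den - q.num)| := by rw [abs_mul, Nat.abs_cast]
    _ = q.den * |ζ * x - round (ζ * x)| := by rw [herr, abs_mul, Nat.abs_cast]
    _ ≤ q.den * ε := by gcongr; exact hdist1

lemma mem_approxSet_one {ζ : ℝ} (hirr : Irrational ζ) {k x y : ℕ} (hy : 0 < y) (hyx : y ^ k ≤ x)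
    (h : (x : ℝ) ^ 2 * distNearestInt (ζ * y) ≤ y) : y ∈ approxSet 1 ζ (2 * k - 1) := by
  have hy0 : (0 : ℝ) < y := by exact_mod_cast hy
  have hyx' : ((y : ℝ) ^ k) ^ 2 ≤ (x : ℝ) ^ 2 := by gcongr; exact_mod_cast hyx
  have hexp : (y : ℝ) ^ (-(2 * (k : ℝ) - 1)) = y / ((y : ℝ) ^ k) ^ 2 := by
    rw [neg_sub, Real.rpow_sub hy0, Real.rpow_one, ← pow_mul, ← Real.rpow_natCast]
    push_cast; ring_nf
  refine ⟨hy, ?_, ?_⟩ <;> rw [maxDist_one]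
  · exact (hirr.mul_natCast hy.ne').distNearestInt_pos
  · rw [hexp, le_div_iff₀ (by positivity)]
    calc distNearestInt (ζ * y) * ((y : ℝ) ^ k) ^ 2
        ≤ distNearestInt (ζ * y) * (x : ℝ) ^ 2 :=
          mul_le_mul_of_nonneg_left hyx' (distNearestInt_nonneg _)
      _ ≤ (y : ℝ) := by linarith

lemma finite_setOf_sq_mul_le {δ c : ℝ} (hδ : 0 < δ) : {x : ℕ | (x : ℝ) ^ 2 * δ ≤ c}.Finite := by
  refine (Set.finite_Iic ⌈c / δ⌉₊).subset fun x hx => (Nat.cast_le (α := ℝ)).mp ?_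
  calc (x : ℝ) ≤ (x : ℝ) ^ 2 := by exact_mod_cast Nat.le_self_pow two_ne_zero x
    _ ≤ c / δ := (le_div_iff₀ hδ).mpr hx
    _ ≤ ⌈c / δ⌉₊ := Nat.le_ceil _

lemma approxSet_one_infinite {ζ η : ℝ} (hirr : Irrational ζ) {k : ℕ} (hk : 1 ≤ k) (hη : 1 < η)
    (hT : (approxSet k ζ η).Infinite) : (approxSet 1 ζ (2 * k - 1)).Infinite := by
  set C := 4 * (1 + |ζ|) ^ k
  have hlarge : ∀ᶠ x : ℕ in atTop, C * (x : ℝ) ^ (-(η - 1)) < 1 := by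
    have := ((tendsto_rpow_neg_atTop (by linarith : 0 < η - 1)).comp
      tendsto_natCast_atTop_atTop).const_mul C
    rw [mul_zero] at this
    exact this.eventually (gt_mem_nhds one_pos)
  have hgood := Nat.frequently_atTop_iff_infinite.mp
    ((Nat.frequently_atTop_iff_infinite.mpr hT).and_eventually hlarge)
  refine hgood.of_finite_fibers (fun x y : ℕ => (x : ℝ) ^ 2 * distNearestInt (ζ * y) ≤ y) ?_
    fun y ⟨_, hy, _⟩ => finite_setOf_sq_mul_le (by rwa [maxDist_one] at hy)
  rintro x ⟨⟨hx, -, hxη⟩, hC⟩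
  have hx0 : (0 : ℝ) < x := by exact_mod_cast hx
  have hxη' : (x : ℝ) * maxDist k ζ x ≤ (x : ℝ) ^ (-(η - 1)) := by
    calc (x : ℝ) * maxDist k ζ x ≤ x * (x : ℝ) ^ (-η) := by gcongr
      _ = (x : ℝ) ^ (-(η - 1)) := by
        rw [show -(η - 1) = 1 + -η by ring, Real.rpow_add hx0, Real.rpow_one]
  obtain ⟨y, hy, hyx, hyd⟩ := exists_den_pow_le_of_maxDist_small hk hx
    (lt_of_le_of_lt (by gcongr) hC)
  have hxinv : (x : ℝ) * (x : ℝ) ^ (-η) ≤ 1 := by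
    rw [← Real.rpow_one_add' hx0.le (by linarith)]
    exact Real.rpow_le_one_of_one_le_of_nonpos (by exact_mod_cast hx) (by linarith)
  have hsq : (x : ℝ) ^ 2 * distNearestInt (ζ * y) ≤ y := by
    calc (x : ℝ) ^ 2 * distNearestInt (ζ * y) = x * (x * distNearestInt (ζ * y)) := by ring
      _ ≤ x * (y * (x : ℝ) ^ (-η)) :=
          mul_le_mul_of_nonneg_left (hyd.trans (by gcongr)) (Nat.cast_nonneg x)
      _ = y * (x * (x : ℝ) ^ (-η)) := by ring
      _ ≤ y := mul_le_of_le_one_right (Nat.cast_nonneg y) hxinv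
  exact ⟨y, mem_approxSet_one hirr hy hyx hsq, hsq⟩

theorem stmt5 (ζ : ℝ) (hirr : Irrational ζ) (hfin : lambdaConst 1 ζ < ⊤) :
    {k : ℕ | 0 < k ∧ 1 < lambdaConst k ζ}.Finite := by
  obtain ⟨w, hw, -⟩ := EReal.exists_between_coe_real hfin
  refine (Set.finite_Iic ⌈(w + 1) / 2⌉₊).subset fun k ⟨hk, hlam⟩ => ?_
  obtain ⟨η, hη, hT⟩ :=
    exists_approxSet_infinite_of_coe_lt_lambdaConst zero_le_one (by exact_mod_cast hlam)
  have h2k : ((2 * k - 1 : ℝ) : EReal) < w :=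
    (coe_le_lambdaConst (approxSet_one_infinite hirr hk hη hT)).trans_lt hw
  have hkw : (k : ℝ) ≤ ⌈(w + 1) / 2⌉₊ := by
    linarith [EReal.coe_lt_coe_iff.mp h2k, Nat.le_ceil ((w + 1) / 2)]
  exact_mod_cast hkw
end

section
/- Let k ≥ 2 be an integer, ζ a real number, and T > 1 a fixed real number. Then there exists a threshold x̂ = x̂(T, ζ, k) such that for every integer x ≥ x̂ satisfying max_{1≤j≤k} ‖ζ^j x‖ ≤ x^{−T}, there exist positive integers x_0, M_0 and an integer y_0 with gcd(x_0, y_0) = 1, x = M_0·x_0, |ζx_0 − y_0| = ‖ζx_0‖ = min_{1≤v≤x} ‖ζv‖, and moreover x ≥ x_0^k, M_0 ≥ x_0^{k−1}, and |ζx_0 − y_0| ≤ x_0^{−kT−k+1}. -/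
/-!
Let `x₀` be the first minimiser of `v ↦ ‖ζ v‖` on `[1, x]` and `y₀` the integer nearest to `ζ x₀`;
minimality forces `gcd (x₀, y₀) = 1`. Put `D = x^{-T}`, so `‖ζ^j x‖ ≤ D` for `j ≤ k`, and `D x` is
tiny once `x` is large. First, `y₀ x / x₀` is within `‖ζ x₀‖ x / x₀ + D < 1 / x₀` of an integer,
so it is an integer and `x₀ ∣ x`; writing `x = M₀ x₀` this gives `M₀ ‖ζ x₀‖ = ‖ζ x‖ ≤ D`.
Inductively, if `x = m x₀^j`, then `(y₀ / x₀)^(j+1) x = y₀^(j+1) m / x₀` differs from `ζ^(j+1) x` by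
at most `(j+1) C^j M₀ ‖ζ x₀‖ ≤ (j+1) C^j D` with `C = |ζ| + 1`, so it lies within
`((j+1) C^j + 1) D < 1 / x₀` of an integer; being a fraction with denominator `x₀`, it is one,
and `x₀^(j+1) ∣ x`. Hence `x₀^k ∣ x`, giving `x₀^k ≤ x`, `x₀^(k-1) ≤ M₀`, and finally
`‖ζ x₀‖ ≤ D / M₀ ≤ x₀^(-kT) / x₀^(k-1)`.
-/

open Filter Topology

lemma distNearestInt_le_abs_sub_add (a b : ℝ) : distNearestInt a ≤ |a - b| + distNearestInt b :=
  (round_le a (round b)).trans (abs_sub_le a b _)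

lemma distNearestInt_eq_abs_sub {a : ℝ} {n : ℤ} (h : |a - n| < 1 / 2) :
    distNearestInt a = |a - n| := by
  obtain ⟨h₁, h₂⟩ := abs_lt.1 h
  have hround : round a = n := round_eq_iff.2 ⟨by linarith, by linarith⟩
  rw [distNearestInt, hround]

lemma intCast_dvd_of_distNearestInt_div_lt {a : ℤ} {b : ℕ} (hb : 0 < b)
    (h : distNearestInt (a / b) < 1 / b) : (b : ℤ) ∣ a := by
  have hbR : (0 : ℝ) < b := by exact_mod_cast hb
  refine ⟨round ((a : ℝ) / b), sub_eq_zero.1 (Int.abs_lt_one_iff.1 ?_)⟩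
  have : |((a - b * round ((a : ℝ) / b) : ℤ) : ℝ)| < 1 := by
    push_cast
    rw [show (a : ℝ) - b * round ((a : ℝ) / b) = b * (a / b - round ((a : ℝ) / b)) by
      field_simp, abs_mul, abs_of_pos hbR]
    exact (lt_div_iff₀' hbR).1 h
  exact_mod_cast this

lemma le_maxDist (k : ℕ) (ζ : ℝ) (x : ℕ) {j : ℕ} (hj : j ∈ Finset.Icc 1 k) :
    distNearestInt (ζ ^ j * x) ≤ maxDist k ζ x := by
  have hb : BddAbove (Set.range fun j : ℕ =>
      ⨆ _ : j ∈ Finset.Icc 1 k, distNearestInt (ζ ^ j * x)) := by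
    refine ⟨1 / 2, ?_⟩
    rintro r ⟨i, rfl⟩
    exact Real.iSup_le (fun _ => abs_sub_round _) (by norm_num)
  have h := le_ciSup hb j
  rw [ciSup_pos hj] at h
  exact h

lemma exists_first_isLeast_image_Icc {α : Type*} [LinearOrder α] (f : ℕ → α) {N : ℕ}
    (hN : 1 ≤ N) : ∃ n ∈ Set.Icc 1 N, IsLeast (f '' Set.Icc 1 N) (f n) ∧
      ∀ m, 0 < m → m < n → f n < f m := by
  classical
  have hex : ∃ n, n ∈ Set.Icc 1 N ∧ IsLeast (f '' Set.Icc 1 N) (f n) := by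
    obtain ⟨n, hn, hmin⟩ := (Set.finite_Icc 1 N).toFinset.exists_min_image f
      ⟨1, by simpa using hN⟩
    rw [Set.Finite.mem_toFinset] at hn
    exact ⟨n, hn, ⟨n, hn, rfl⟩, by
      rintro _ ⟨m, hm, rfl⟩; exact hmin m (by simpa using hm)⟩
  refine ⟨Nat.find hex, (Nat.find_spec hex).1, (Nat.find_spec hex).2, fun m hm hlt => ?_⟩
  by_contra! hle
  have hmN : m ∈ Set.Icc 1 N := ⟨hm, hlt.le.trans (Nat.find_spec hex).1.2⟩
  refine Nat.find_min hex hlt ⟨hmN, ⟨m, hmN, rfl⟩, ?_⟩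
  exact fun _ hv => hle.trans ((Nat.find_spec hex).2.2 hv)

/-- Dividing `x₀` and `round (ζ x₀)` by a common factor `d` gives a smaller denominator `u` with
`‖ζ u‖ ≤ ‖ζ x₀‖ / d`. -/
lemma gcd_round_eq_one {ζ : ℝ} {x₀ : ℕ} (hx₀ : 0 < x₀)
    (hfirst : ∀ v : ℕ, 0 < v → v < x₀ → distNearestInt (ζ * x₀) < distNearestInt (ζ * v)) :
    Int.gcd x₀ (round (ζ * x₀)) = 1 := by
  set d := Int.gcd x₀ (round (ζ * x₀))
  by_contra hd
  have hd0 : 0 < d := Int.gcd_pos_of_ne_zero_left _ (by exact_mod_cast hx₀.ne')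
  obtain ⟨u, hu⟩ : d ∣ x₀ := Int.natCast_dvd_natCast.1 (Int.gcd_dvd_left _ _)
  obtain ⟨w, hw⟩ : (d : ℤ) ∣ round (ζ * x₀) := Int.gcd_dvd_right _ _
  clear_value d
  have hu0 : 0 < u := Nat.pos_of_mul_pos_left (hu ▸ hx₀)
  have hux : u < x₀ := hu ▸ lt_mul_left hu0 (by omega)
  have hdR : (1 : ℝ) ≤ d := by exact_mod_cast hd0
  have hsplit : ζ * x₀ - round (ζ * x₀) = d * (ζ * u - w) := by
    rw [hw]; push_cast [hu]; ring
  refine (hfirst u hu0 hux).not_ge ?_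
  calc distNearestInt (ζ * u) ≤ |ζ * u - w| := round_le _ _
    _ ≤ d * |ζ * u - w| := le_mul_of_one_le_left (abs_nonneg _) hdR
    _ = distNearestInt (ζ * x₀) := by
      rw [distNearestInt, hsplit, abs_mul, Nat.abs_cast]

/-- The rational `y₀^(j+1) m / x₀ = (y₀ / x₀)^(j+1) m x₀^j` lies within `1 / x₀` of an integer,
so it is one; coprimality then moves the divisibility onto `m`. -/
lemma dvd_of_abs_div_pow_sub_pow_mul_add_lt {ζ : ℝ} {x₀ : ℕ} {y₀ : ℤ} (hx₀ : 0 < x₀)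
    (hcop : IsCoprime (x₀ : ℤ) y₀) (m j : ℕ)
    (h : |((y₀ : ℝ) / x₀) ^ (j + 1) - ζ ^ (j + 1)| * (m * x₀ ^ j)
      + distNearestInt (ζ ^ (j + 1) * (m * x₀ ^ j)) < 1 / x₀) :
    x₀ ∣ m := by
  have hx₀R : (x₀ : ℝ) ≠ 0 := by positivity
  have hdvd : (x₀ : ℤ) ∣ y₀ ^ (j + 1) * m := by
    have hdiv : ((y₀ ^ (j + 1) * m : ℤ) : ℝ) / x₀ = ((y₀ : ℝ) / x₀) ^ (j + 1) * (m * x₀ ^ j) := by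
      rw [div_pow]
      push_cast
      field_simp
      ring
    refine intCast_dvd_of_distNearestInt_div_lt hx₀
      ((distNearestInt_le_abs_sub_add _ (ζ ^ (j + 1) * (m * x₀ ^ j))).trans_lt ?_)
    rwa [hdiv, ← sub_mul, abs_mul, abs_of_nonneg (by positivity : (0 : ℝ) ≤ m * x₀ ^ j)]
  exact Int.natCast_dvd_natCast.1 (hcop.pow_right.dvd_of_dvd_mul_left hdvd)

lemma distNearestInt_mul_natCast_mul {ζ : ℝ} {x₀ M₀ : ℕ} {y₀ : ℤ}
    (h : |ζ * x₀ - y₀| * M₀ < 1 / 2) :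
    distNearestInt (ζ * (M₀ * x₀ : ℕ)) = |ζ * x₀ - y₀| * M₀ := by
  have hsplit : ζ * (M₀ * x₀ : ℕ) - ((y₀ * M₀ : ℤ) : ℝ) = (ζ * x₀ - y₀) * M₀ := by
    push_cast; ring
  have habs : |ζ * (M₀ * x₀ : ℕ) - ((y₀ * M₀ : ℤ) : ℝ)| = |ζ * x₀ - y₀| * M₀ := by
    rw [hsplit, abs_mul, Nat.abs_cast]
  rw [distNearestInt_eq_abs_sub (habs ▸ h), habs]

lemma abs_round_mul_div_le (ζ : ℝ) {q : ℕ} (hq : 0 < q) : |(round (ζ * q) : ℝ) / q| ≤ |ζ| + 1 := by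
  have hqR : (1 : ℝ) ≤ q := by exact_mod_cast hq
  have hsplit : (round (ζ * q) : ℝ) / q = ζ - (ζ * q - round (ζ * q)) / q := by
    field_simp
    ring
  calc |(round (ζ * q) : ℝ) / q| = |ζ - (ζ * q - round (ζ * q)) / q| := by rw [hsplit]
    _ ≤ |ζ| + |(ζ * q - round (ζ * q)) / q| := abs_sub _ _
    _ ≤ |ζ| + 1 := by
        rw [abs_div, Nat.abs_cast]
        have hround : |ζ * q - round (ζ * q)| ≤ 1 / 2 := abs_sub_round _
        gcongr
        exact (div_le_self (abs_nonneg _) hqR).trans (by linarith)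

lemma exists_eq_mul_abs_sub_mul_le {ζ D : ℝ} {x x₀ : ℕ} {y₀ : ℤ} (hx₀ : 0 < x₀)
    (hx₀x : x₀ ≤ x) (hcop : IsCoprime (x₀ : ℤ) y₀) (hε : |ζ * x₀ - y₀| ≤ D)
    (hζx : distNearestInt (ζ * x) ≤ D) (hDx : 2 * (D * x) < 1) :
    ∃ M₀ : ℕ, x = M₀ * x₀ ∧ |ζ * x₀ - y₀| * M₀ ≤ D := by
  have hx₀R : (0 : ℝ) < x₀ := by exact_mod_cast hx₀
  have hx₀xR : (x₀ : ℝ) ≤ x := by exact_mod_cast hx₀x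
  have hD0 : 0 ≤ D := (abs_nonneg _).trans hε
  have hεx : |(y₀ : ℝ) / x₀ - ζ| = |ζ * x₀ - y₀| / x₀ := by
    rw [show (y₀ : ℝ) / x₀ - ζ = -(ζ * x₀ - y₀) / x₀ by field_simp; ring, abs_div, abs_neg,
      Nat.abs_cast]
  obtain ⟨M₀, hxM⟩ : x₀ ∣ x := by
    refine dvd_of_abs_div_pow_sub_pow_mul_add_lt (ζ := ζ) hx₀ hcop x 0 ?_
    rw [zero_add, pow_one, pow_one, pow_zero, mul_one, hεx, lt_div_iff₀ hx₀R]
    calc (|ζ * x₀ - y₀| / x₀ * x + distNearestInt (ζ * x)) * x₀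
        = |ζ * x₀ - y₀| * x + distNearestInt (ζ * x) * x₀ := by field_simp
      _ ≤ D * x + D * x := by gcongr
      _ < 1 := by linarith
  rw [mul_comm] at hxM
  have hMx : (M₀ : ℝ) ≤ x := by exact_mod_cast hxM ▸ Nat.le_mul_of_pos_right M₀ hx₀
  have hhalf : |ζ * x₀ - y₀| * M₀ < 1 / 2 :=
    calc |ζ * x₀ - y₀| * M₀ ≤ D * x := mul_le_mul hε hMx (by positivity) hD0
      _ < 1 / 2 := by linarith
  refine ⟨M₀, hxM, ?_⟩
  rw [← distNearestInt_mul_natCast_mul hhalf, ← hxM]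
  exact hζx

lemma pow_dvd_of_forall_distNearestInt_pow_mul_le {k : ℕ} {ζ C D : ℝ} {x x₀ M₀ : ℕ} {y₀ : ℤ}
    (hx₀ : 0 < x₀) (hcop : IsCoprime (x₀ : ℤ) y₀) (hC : 1 ≤ C) (hζC : |ζ| ≤ C)
    (hyC : |(y₀ : ℝ) / x₀| ≤ C) (hxM : x = M₀ * x₀) (hεM : |ζ * x₀ - y₀| * M₀ ≤ D)
    (hD : ∀ j ∈ Finset.Icc 1 k, distNearestInt (ζ ^ j * x) ≤ D)
    (hsmall : ((k + 1) * C ^ k + 1) * D * x₀ < 1) {j : ℕ} (hj : j ≤ k) : x₀ ^ j ∣ x := by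
  induction j with
  | zero => exact pow_zero x₀ ▸ one_dvd x
  | succ j ih =>
    obtain ⟨m, hm⟩ := ih (by omega)
    have hx₀R : (0 : ℝ) < x₀ := by exact_mod_cast hx₀
    have hxR : (x : ℝ) = m * x₀ ^ j := by rw [hm]; push_cast; ring
    have hD0 : 0 ≤ D := (by positivity : (0 : ℝ) ≤ |ζ * x₀ - y₀| * M₀).trans hεM
    have hεx : |(y₀ : ℝ) / x₀ - ζ| * x = |ζ * x₀ - y₀| * M₀ := by
      rw [show (y₀ : ℝ) / x₀ - ζ = -(ζ * x₀ - y₀) / x₀ by field_simp; ring, abs_div, abs_neg,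
        Nat.abs_cast, hxM, Nat.cast_mul]
      field_simp
    have hdiff : |((y₀ : ℝ) / x₀) ^ (j + 1) - ζ ^ (j + 1)| * x ≤ (k + 1) * C ^ k * D := by
      calc |((y₀ : ℝ) / x₀) ^ (j + 1) - ζ ^ (j + 1)| * x
          ≤ |(y₀ : ℝ) / x₀ - ζ| * (j + 1 : ℕ) * max |(y₀ : ℝ) / x₀| |ζ| ^ (j + 1 - 1) * x := by
            gcongr
            exact abs_pow_sub_pow_le _ _ _
        _ = (j + 1) * max |(y₀ : ℝ) / x₀| |ζ| ^ j * (|(y₀ : ℝ) / x₀ - ζ| * x) := by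
            push_cast
            ring
        _ ≤ (k + 1) * C ^ k * D := by
            rw [hεx]
            have hjk : (j : ℝ) + 1 ≤ k + 1 := by exact_mod_cast Nat.succ_le_succ (by omega)
            have hpow : max |(y₀ : ℝ) / x₀| |ζ| ^ j ≤ C ^ k :=
              (pow_le_pow_left₀ (by positivity) (max_le hyC hζC) j).trans
                (pow_le_pow_right₀ hC (by omega))
            gcongr
    have hx₀m : x₀ ∣ m := by
      refine dvd_of_abs_div_pow_sub_pow_mul_add_lt (ζ := ζ) hx₀ hcop m j ?_
      rw [← hxR, lt_div_iff₀ hx₀R]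
      have hstep := hD (j + 1) (Finset.mem_Icc.2 ⟨by omega, hj⟩)
      calc (|((y₀ : ℝ) / x₀) ^ (j + 1) - ζ ^ (j + 1)| * x + distNearestInt (ζ ^ (j + 1) * x)) * x₀
          ≤ ((k + 1) * C ^ k * D + D) * x₀ := by gcongr
        _ < 1 := by linarith
    rw [hm, pow_succ]
    exact mul_dvd_mul_left _ hx₀m

lemma le_rpow_of_mul_le {a X M e T : ℝ} {k : ℕ} (hk : 1 ≤ k) (ha : 0 < a) (hT : 0 ≤ T)
    (haX : a ^ k ≤ X) (haM : a ^ (k - 1) ≤ M) (he : 0 ≤ e) (heM : e * M ≤ X ^ (-T)) :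
    e ≤ a ^ (-(k : ℝ) * T - k + 1) := by
  have hsplit : a ^ (-(k : ℝ) * T - k + 1) * a ^ (k - 1) = (a ^ k) ^ (-T) := by
    rw [← Real.rpow_natCast, ← Real.rpow_natCast, ← Real.rpow_add ha, ← Real.rpow_mul ha.le]
    congr 1
    push_cast [Nat.cast_sub hk]
    ring
  rw [← mul_le_mul_iff_left₀ (by positivity : 0 < a ^ (k - 1)), hsplit]
  calc e * a ^ (k - 1) ≤ e * M := by gcongr
    _ ≤ X ^ (-T) := heM
    _ ≤ (a ^ k) ^ (-T) := Real.rpow_le_rpow_of_nonpos (by positivity) haX (by linarith)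

lemma eventually_mul_rpow_neg_mul_lt_one (c : ℝ) {T : ℝ} (hT : 1 < T) :
    ∀ᶠ x : ℕ in atTop, c * ((x : ℝ) ^ (-T) * x) < 1 := by
  have hlim : Tendsto (fun x : ℕ => c * ((x : ℝ) ^ (-T) * x)) atTop (𝓝 0) := by
    have h := ((tendsto_rpow_neg_atTop (sub_pos.2 hT)).comp tendsto_natCast_atTop_atTop).const_mul c
    rw [mul_zero] at h
    refine h.congr' ?_
    filter_upwards [eventually_gt_atTop 0] with x hx
    rw [Function.comp_apply, ← Real.rpow_add_one (by positivity), neg_sub, sub_eq_neg_add]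
  exact hlim.eventually (eventually_lt_nhds one_pos)

theorem exists_coprime_best_approx_of_forall_distNearestInt_pow_mul_le {k x : ℕ} {ζ D : ℝ}
    (hk : 1 ≤ k) (hx : 1 ≤ x) (hD : ∀ j ∈ Finset.Icc 1 k, distNearestInt (ζ ^ j * x) ≤ D)
    (hsmall : ((k + 1) * (|ζ| + 1) ^ k + 1) * (D * x) < 1) :
    ∃ x₀ M₀ : ℕ, 0 < x₀ ∧ 0 < M₀ ∧ Int.gcd x₀ (round (ζ * x₀)) = 1 ∧ x = M₀ * x₀ ∧
      IsLeast ((fun v : ℕ => distNearestInt (ζ * v)) '' Set.Icc 1 x) (distNearestInt (ζ * x₀)) ∧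
      x₀ ^ k ≤ x ∧ x₀ ^ (k - 1) ≤ M₀ ∧ distNearestInt (ζ * x₀) * M₀ ≤ D := by
  obtain ⟨x₀, ⟨hx₀, hx₀x⟩, hleast, hfirst⟩ :=
    exists_first_isLeast_image_Icc (fun v : ℕ => distNearestInt (ζ * v)) hx
  have hgcd := gcd_round_eq_one hx₀ hfirst
  have hcop : IsCoprime (x₀ : ℤ) (round (ζ * x₀)) := Int.isCoprime_iff_gcd_eq_one.2 hgcd
  have hζx : distNearestInt (ζ * x) ≤ D := by simpa using hD 1 (by simp [hk])
  have hε : distNearestInt (ζ * x₀) ≤ D := (hleast.2 ⟨x, ⟨hx, le_rfl⟩, rfl⟩).trans hζx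
  have hD0 : 0 ≤ D := (abs_nonneg _).trans hε
  have hx₀xR : (x₀ : ℝ) ≤ x := by exact_mod_cast hx₀x
  have hDx : 2 * (D * x) < 1 := by
    have : (1 : ℝ) ≤ (k + 1) * (|ζ| + 1) ^ k :=
      one_le_mul_of_one_le_of_one_le (by linarith [k.cast_nonneg (α := ℝ)])
        (one_le_pow₀ (by linarith [abs_nonneg ζ]))
    nlinarith [mul_nonneg hD0 (Nat.cast_nonneg (α := ℝ) x)]
  have hsmall₀ : ((k + 1) * (|ζ| + 1) ^ k + 1) * D * x₀ < 1 :=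
    calc ((k + 1) * (|ζ| + 1) ^ k + 1) * D * x₀
        ≤ ((k + 1) * (|ζ| + 1) ^ k + 1) * (D * x) := by rw [mul_assoc]; gcongr
      _ < 1 := hsmall
  obtain ⟨M₀, hxM, hεM⟩ := exists_eq_mul_abs_sub_mul_le hx₀ hx₀x hcop hε hζx hDx
  have hM₀ : 0 < M₀ := Nat.pos_of_ne_zero fun h => by simp [h] at hxM; omega
  have hdvd : x₀ ^ k ∣ x :=
    pow_dvd_of_forall_distNearestInt_pow_mul_le (C := |ζ| + 1) hx₀ hcop
      (by linarith [abs_nonneg ζ]) (by linarith) (abs_round_mul_div_le ζ hx₀) hxM hεM hD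
      hsmall₀ le_rfl
  have hdvdM : x₀ ^ (k - 1) ∣ M₀ := by
    refine Nat.dvd_of_mul_dvd_mul_right hx₀ ?_
    rwa [← pow_succ, Nat.sub_add_cancel hk, ← hxM]
  exact ⟨x₀, M₀, hx₀, hM₀, hgcd, hxM, hleast, Nat.le_of_dvd (by omega) hdvd,
    Nat.le_of_dvd hM₀ hdvdM, hεM⟩

theorem stmt10 (k : ℕ) (hk : 2 ≤ k) (ζ : ℝ) (T : ℝ) (hT : 1 < T) :
    ∃ xhat : ℕ, ∀ x : ℕ, xhat ≤ x → maxDist k ζ x ≤ (x : ℝ) ^ (-T) →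
      ∃ (x₀ M₀ : ℕ) (y₀ : ℤ), 0 < x₀ ∧ 0 < M₀ ∧ Int.gcd (x₀ : ℤ) y₀ = 1 ∧
        x = M₀ * x₀ ∧
        |ζ * x₀ - y₀| = distNearestInt (ζ * x₀) ∧
        IsLeast ((fun v : ℕ => distNearestInt (ζ * v)) '' Set.Icc 1 x)
          (distNearestInt (ζ * x₀)) ∧
        x₀ ^ k ≤ x ∧ x₀ ^ (k - 1) ≤ M₀ ∧
        |ζ * x₀ - y₀| ≤ (x₀ : ℝ) ^ (-(k : ℝ) * T - k + 1) := by
  obtain ⟨xhat, hxhat⟩ := ((eventually_ge_atTop 1).and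
    (eventually_mul_rpow_neg_mul_lt_one ((k + 1) * (|ζ| + 1) ^ k + 1) hT)).exists_forall_of_atTop
  refine ⟨xhat, fun x hx hmax => ?_⟩
  obtain ⟨hx1, hsmall⟩ := hxhat x hx
  obtain ⟨x₀, M₀, hx₀, hM₀, hgcd, hxM, hleast, hxk, hMk, hεM⟩ :=
    exists_coprime_best_approx_of_forall_distNearestInt_pow_mul_le (by omega) hx1
      (fun j hj => (le_maxDist k ζ x hj).trans hmax) hsmall
  refine ⟨x₀, M₀, round (ζ * x₀), hx₀, hM₀, hgcd, hxM, rfl, hleast, hxk, hMk, ?_⟩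
  exact le_rpow_of_mul_le (by omega) (by exact_mod_cast hx₀) (by linarith)
    (by exact_mod_cast hxk) (by exact_mod_cast hMk) (abs_nonneg _) hεM
end
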